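/- arXiv:1410.0232 — 5 statements merged into one kernel-verified Lean document; each statement's English description precedes it below -/
import Mathlib

section
/- For every real x, the function J₂(x) := (1/(2π)) ∫₀^{2π} cos(2t)·cos(x·sin t) dt satisfies J₂(x) ≤ x²/8. -/
open Real

/-!
Put `φ y = cos y + y ^ 2 / 2`. Since `φ' y = y - sin y ≥ 0` for `y ≥ 0` and `φ` is even,
`φ y` is a nondecreasing function of `y ^ 2`. As `cos 2t = 1 - 2 sin² t`, the sign of
`cos 2t` is that of `x² / 2 - (x sin t)²`, so `cos 2t · (φ (x sin t) - φ (x / √2)) ≤ 0`.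
Hence `cos 2t · cos (x sin t) ≤ cos 2t · (φ (x / √2) - x² sin² t / 2)`, and the right-hand
side integrates over `[0, 2π]` to exactly `π x² / 4`.
-/

/-- The second Bessel function of the first kind, via its integral representation. -/
noncomputable def J2 (x : ℝ) : ℝ :=
  (1/(2*π)) * ∫ t in (0:ℝ)..(2*π), Real.cos (2*t) * Real.cos (x * Real.sin t)

lemma monotoneOn_cos_add_sq_div_two :
    MonotoneOn (fun y : ℝ => cos y + y ^ 2 / 2) (Set.Ici 0) := by
  refine monotoneOn_of_hasDerivWithinAt_nonneg (f' := fun y => y - sin y) (convex_Ici 0)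
    (by fun_prop) (fun y _ => ?_) (fun y hy => ?_)
  · refine (((hasDerivAt_cos y).add ((hasDerivAt_pow 2 y).div_const 2)).congr_deriv ?_)
      |>.hasDerivWithinAt
    push_cast; ring
  · rw [interior_Ici] at hy
    exact sub_nonneg.2 (sin_le (le_of_lt hy))

lemma cos_add_sq_div_two_le_of_sq_le {y z : ℝ} (h : y ^ 2 ≤ z ^ 2) :
    cos y + y ^ 2 / 2 ≤ cos z + z ^ 2 / 2 := by
  have := monotoneOn_cos_add_sq_div_two (abs_nonneg y) (abs_nonneg z) (sq_le_sq.1 h)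
  simpa only [cos_abs, sq_abs] using this

lemma cos_two_mul_mul_cos_mul_sin_le (x t : ℝ) :
    cos (2 * t) * cos (x * sin t) ≤
      cos (2 * t) * (cos (x / √2) + x ^ 2 / 4 - x ^ 2 / 2 * sin t ^ 2) := by
  have hz : (x / √2) ^ 2 = x ^ 2 / 2 := by rw [div_pow, sq_sqrt zero_le_two]
  have hsq : (x / √2) ^ 2 - (x * sin t) ^ 2 = x ^ 2 * cos (2 * t) / 2 := by
    rw [hz, cos_two_mul, cos_sq']; ring
  suffices 0 ≤ cos (2 * t) * ((cos (x / √2) + (x / √2) ^ 2 / 2) -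
      (cos (x * sin t) + (x * sin t) ^ 2 / 2)) by
    rw [hz] at this; linarith
  rcases le_total 0 (cos (2 * t)) with hc | hc
  · refine mul_nonneg hc (sub_nonneg.2 (cos_add_sq_div_two_le_of_sq_le ?_))
    nlinarith [sq_nonneg x]
  · refine mul_nonneg_of_nonpos_of_nonpos hc (sub_nonpos.2 (cos_add_sq_div_two_le_of_sq_le ?_))
    nlinarith [sq_nonneg x]

lemma integral_cos_two_mul_mul_sub_mul_sin_sq (c k : ℝ) :
    ∫ t in (0:ℝ)..2 * π, cos (2 * t) * (c - k * sin t ^ 2) = k * π / 2 := by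
  have hderiv (t : ℝ) : HasDerivAt
      (fun t => c * sin (2 * t) / 2 - k * (sin (2 * t) / 4 - t / 4 - sin (4 * t) / 16))
      (cos (2 * t) * (c - k * sin t ^ 2)) t := by
    have h2 := (hasDerivAt_sin (2 * t)).comp t ((hasDerivAt_id t).const_mul 2)
    have h4 := (hasDerivAt_sin (4 * t)).comp t ((hasDerivAt_id t).const_mul 4)
    refine (((h2.const_mul c).div_const 2).sub ((((h2.div_const 4).sub
      ((hasDerivAt_id t).div_const 4)).sub (h4.div_const 16)).const_mul k)).congr_deriv ?_
    have hc4 : cos (4 * t) = 2 * cos (2 * t) ^ 2 - 1 := by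
      rw [show 4 * t = 2 * (2 * t) by ring, cos_two_mul]
    rw [hc4, sin_sq, cos_sq t]
    ring
  rw [intervalIntegral.integral_eq_sub_of_hasDerivAt (fun t _ => hderiv t)
    (Continuous.intervalIntegrable (by fun_prop) _ _)]
  have h4 : sin (2 * (2 * π)) = 0 := by rw [← mul_assoc]; exact_mod_cast sin_nat_mul_pi 4
  have h8 : sin (4 * (2 * π)) = 0 := by rw [← mul_assoc]; exact_mod_cast sin_nat_mul_pi 8
  simp only [h4, h8, mul_zero, sin_zero]
  ring

theorem J2_upper_bound (x : ℝ) : J2 x ≤ x^2/8 := by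
  have hI : ∫ t in (0:ℝ)..2 * π, cos (2 * t) * cos (x * sin t) ≤ π * x ^ 2 / 4 :=
    calc ∫ t in (0:ℝ)..2 * π, cos (2 * t) * cos (x * sin t)
        ≤ ∫ t in (0:ℝ)..2 * π,
            cos (2 * t) * (cos (x / √2) + x ^ 2 / 4 - x ^ 2 / 2 * sin t ^ 2) :=
          intervalIntegral.integral_mono_on (by positivity)
            (Continuous.intervalIntegrable (by fun_prop) _ _)
            (Continuous.intervalIntegrable (by fun_prop) _ _)
            fun t _ => cos_two_mul_mul_cos_mul_sin_le x t
      _ = π * x ^ 2 / 4 := by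
          rw [integral_cos_two_mul_mul_sub_mul_sin_sq]; ring
  calc J2 x ≤ 1 / (2 * π) * (π * x ^ 2 / 4) := by
        unfold J2; gcongr
    _ = x ^ 2 / 8 := by field_simp; ring
end

section
/- For every real x, the function J₂(x) := (1/(2π)) ∫₀^{2π} cos(2t)·cos(x·sin t) dt satisfies x²/8 − x⁴/96 ≤ J₂(x). -/
/-!
Integrating by parts against `sin t cos t = (sin 2t)/2`, which vanishes at both ends, turns
`J₂(x)` into `(1/2π) ∫₀^{2π} cos² t · y sin y dt` with `y = x sin t`. The Taylor bound
`|sin y - y| ≤ |y|³/6` gives `y sin y ≥ y² - y⁴/6`, and the moments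
`∫₀^{2π} sin² t cos² t = π/4`, `∫₀^{2π} sin⁴ t cos² t = π/8` turn this into `x²/8 - x⁴/96`.
-/

open Real

open intervalIntegral

theorem Real.sq_sub_pow_four_div_six_le_mul_sin (y : ℝ) : y ^ 2 - y ^ 4 / 6 ≤ y * sin y := by
  have h : y * (y - sin y) ≤ y ^ 4 / 6 :=
    calc y * (y - sin y) ≤ |y| * |y - sin y| := by rw [← abs_mul]; exact le_abs_self _
      _ ≤ |y| * (|y| ^ 3 / 6) := by gcongr; exact abs_sub_sin_le y
      _ = y ^ 4 / 6 := by rw [mul_div_assoc', ← pow_succ', Even.pow_abs ⟨2, rfl⟩]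
  linarith

theorem integral_cos_two_mul_mul_comp_sin {f f' : ℝ → ℝ} (hf : ∀ s, HasDerivAt f (f' s) s)
    (hf' : Continuous f') :
    ∫ t in 0..2 * π, cos (2 * t) * f (sin t) = -∫ t in 0..2 * π, sin t * cos t ^ 2 * f' (sin t) := by
  have hcont : Continuous f := continuous_iff_continuousAt.2 fun s => (hf s).continuousAt
  have hderiv : ∀ t, HasDerivAt (fun t => sin t * cos t * f (sin t))
      (cos (2 * t) * f (sin t) + sin t * cos t ^ 2 * f' (sin t)) t := by
    intro t
    refine (((hasDerivAt_sin t).mul (hasDerivAt_cos t)).mul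
      ((hf (sin t)).comp t (hasDerivAt_sin t))).congr_deriv ?_
    simp only [Pi.mul_apply, Function.comp_apply]
    rw [cos_two_mul]
    linear_combination (-f (sin t)) * sin_sq_add_cos_sq t
  have hFTC := integral_eq_sub_of_hasDerivAt (a := 0) (b := 2 * π) (fun t _ => hderiv t)
    ((by fun_prop : Continuous _).intervalIntegrable _ _)
  rw [integral_add ((by fun_prop : Continuous _).intervalIntegrable _ _)
    ((by fun_prop : Continuous _).intervalIntegrable _ _)] at hFTC
  simp only [sin_zero, sin_two_pi, zero_mul, sub_self] at hFTC
  linarith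

theorem integral_sin_pow_mul_cos_sq_zero_two_pi (n : ℕ) :
    ∫ t in 0..2 * π, sin t ^ n * cos t ^ 2 = (∫ t in 0..2 * π, sin t ^ n) / (n + 2) := by
  have hred := integral_sin_pow (a := 0) (b := 2 * π) n
  simp only [sin_zero, sin_two_pi, zero_pow n.succ_ne_zero, zero_mul, sub_self, zero_div,
    zero_add] at hred
  have hsplit : ∀ t, sin t ^ n * cos t ^ 2 = sin t ^ n - sin t ^ (n + 2) := fun t => by
    rw [cos_sq']; ring
  simp_rw [hsplit]
  rw [integral_sub ((by fun_prop : Continuous _).intervalIntegrable _ _)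
    ((by fun_prop : Continuous _).intervalIntegrable _ _), hred]
  field_simp
  ring

theorem integral_sin_sq_zero_two_pi : ∫ t in 0..2 * π, sin t ^ 2 = π := by
  simp

theorem integral_sin_pow_four_zero_two_pi : ∫ t in 0..2 * π, sin t ^ 4 = 3 * π / 4 := by
  norm_num [integral_sin_pow (n := 2)]
  ring

theorem J2_lower_bound (x : ℝ) : x^2/8 - x^4/96 ≤ J2 x := by
  have hparts : ∫ t in 0..2 * π, cos (2 * t) * cos (x * sin t) =
      ∫ t in 0..2 * π, x * sin t * sin (x * sin t) * cos t ^ 2 := by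
    rw [integral_cos_two_mul_mul_comp_sin (f := fun s => cos (x * s))
      (f' := fun s => -sin (x * s) * x)
      (fun s => ((hasDerivAt_id s).const_mul x).cos.congr_deriv (by simp)) (by fun_prop),
      ← integral_neg]
    congr 1; ext t; ring
  have hlower : x ^ 2 * (π / 4) - x ^ 4 / 6 * (π / 8) ≤
      ∫ t in 0..2 * π, x * sin t * sin (x * sin t) * cos t ^ 2 :=
    calc _ = ∫ t in 0..2 * π,
          x ^ 2 * (sin t ^ 2 * cos t ^ 2) - x ^ 4 / 6 * (sin t ^ 4 * cos t ^ 2) := by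
          rw [integral_sub, integral_const_mul, integral_const_mul,
            integral_sin_pow_mul_cos_sq_zero_two_pi, integral_sin_pow_mul_cos_sq_zero_two_pi,
            integral_sin_sq_zero_two_pi, integral_sin_pow_four_zero_two_pi]
          · ring
          all_goals exact (by fun_prop : Continuous _).intervalIntegrable _ _
      _ ≤ _ := integral_mono_on (by positivity)
          ((by fun_prop : Continuous _).intervalIntegrable _ _)
          ((by fun_prop : Continuous _).intervalIntegrable _ _) fun t _ => by
          linear_combination mul_le_mul_of_nonneg_right
            (sq_sub_pow_four_div_six_le_mul_sin (x * sin t)) (sq_nonneg (cos t))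
  rw [J2, hparts]
  calc x ^ 2 / 8 - x ^ 4 / 96 = 1 / (2 * π) * (x ^ 2 * (π / 4) - x ^ 4 / 6 * (π / 8)) := by
        field_simp; ring
    _ ≤ _ := by gcongr
end

section
/- Suppose f : ℝ → ℝ is differentiable and satisfies, for all s ≥ 0, the bound f(s)·f'(s) ≤ 2s/(1+s²), with f(0) = 0 and f ≥ 0 on [0,∞). Then for all s ≥ 0, f(s) ≤ √(2·log(1+s²)), and consequently f(s) ≤ √(2s²/√(1+s²)). -/
open Real Set

/-- `log y ≤ sinh (log y) = (y - y⁻¹) / 2` once `log y ≥ 0`. -/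
lemma two_mul_log_le_sub_inv {y : ℝ} (hy : 1 ≤ y) : 2 * log y ≤ y - y⁻¹ := by
  have h := self_le_sinh_iff.2 (log_nonneg hy)
  rw [sinh_log (by linarith)] at h
  linarith

lemma log_le_sub_one_div_sqrt {x : ℝ} (hx : 1 ≤ x) : log x ≤ (x - 1) / √x := by
  have hy : 1 ≤ √x := one_le_sqrt.2 hx
  have hsq : √x ^ 2 = x := sq_sqrt (by linarith)
  calc log x = 2 * log √x := by rw [log_sqrt (by linarith)]; ring
    _ ≤ √x - (√x)⁻¹ := two_mul_log_le_sub_inv hy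
    _ = (x - 1) / √x := by field_simp; rw [hsq]

/-- `2 g - f ^ 2` has derivative `2 (g' - f f') ≥ 0` on `(a, ∞)`. -/
lemma sq_le_sq_add_two_mul_sub_of_mul_deriv_le {f g g' : ℝ → ℝ} {a b : ℝ}
    (hf : Differentiable ℝ f) (hg : ∀ x, HasDerivAt g (g' x) x)
    (h : ∀ x, a < x → f x * deriv f x ≤ g' x) (hab : a ≤ b) :
    f b ^ 2 ≤ f a ^ 2 + 2 * (g b - g a) := by
  have hφ : ∀ x, HasDerivAt (fun x => 2 * g x - f x ^ 2)
      (2 * g' x - 2 * (f x * deriv f x)) x := fun x =>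
    ((hg x).const_mul 2).fun_sub ((hf x).hasDerivAt.fun_pow 2) |>.congr_deriv (by norm_num; ring)
  have mono : MonotoneOn (fun x => 2 * g x - f x ^ 2) (Ici a) := by
    refine monotoneOn_of_hasDerivWithinAt_nonneg (convex_Ici a)
      (fun x _ => (hφ x).continuousAt.continuousWithinAt)
      (fun x _ => (hφ x).hasDerivWithinAt) fun x hx => ?_
    rw [interior_Ici] at hx
    linarith [h x hx]
  have := mono self_mem_Ici hab hab
  linarith

theorem corrugation_amplitude_upper_bound_general (f : ℝ → ℝ)
    (hdiff : Differentiable ℝ f) (hf0 : f 0 = 0)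
    (hbound : ∀ s, 0 ≤ s → f s * deriv f s ≤ 2*s/(1 + s^2)) :
    ∀ s, 0 ≤ s →
      f s ≤ Real.sqrt (2 * Real.log (1 + s^2)) ∧
      f s ≤ Real.sqrt (2*s^2 / Real.sqrt (1 + s^2)) := by
  intro s hs
  have hderiv_log : ∀ x, HasDerivAt (fun x => log (1 + x ^ 2)) (2 * x / (1 + x ^ 2)) x := fun x => by
    simpa using ((hasDerivAt_pow 2 x).const_add 1).log (by positivity)
  have hsq : f s ^ 2 ≤ 2 * log (1 + s ^ 2) := by
    simpa [hf0] using sq_le_sq_add_two_mul_sub_of_mul_deriv_le hdiff hderiv_log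
      (fun x hx => hbound x hx.le) hs
  have hfirst : f s ≤ √(2 * log (1 + s ^ 2)) := le_sqrt_of_sq_le hsq
  refine ⟨hfirst, hfirst.trans (sqrt_le_sqrt ?_)⟩
  have := log_le_sub_one_div_sqrt (le_add_of_nonneg_right (sq_nonneg s))
  rw [add_sub_cancel_left] at this
  rw [mul_div_assoc]
  linarith

theorem corrugation_amplitude_upper_bound (f : ℝ → ℝ)
    (hdiff : Differentiable ℝ f) (hf0 : f 0 = 0)
    (hnonneg : ∀ s, 0 ≤ s → 0 ≤ f s)
    (hbound : ∀ s, 0 ≤ s → f s * deriv f s ≤ 2*s/(1 + s^2)) :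
    ∀ s, 0 ≤ s →
      f s ≤ Real.sqrt (2 * Real.log (1 + s^2)) ∧
      f s ≤ Real.sqrt (2*s^2 / Real.sqrt (1 + s^2)) :=
  corrugation_amplitude_upper_bound_general f hdiff hf0 hbound
end

section
/- Suppose f : ℝ → ℝ is differentiable with f(0) = 0, f ≥ 0 on [0,∞), and satisfies (f²)'(s)/2 ≥ 8s/((4+s²)(1+s²)) for all s ≥ 0. Then f(s)² ≥ (8/3)·log((4s²+4)/(s²+4)) ≥ 16 s²/(8+5s²) for all s ≥ 0. -/
open Real Set

lemma log_ge_two_sub_aux : ∀ x : ℝ, 1 ≤ x → (2*x - 2)/(x + 1) ≤ Real.log x := by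
  have hd : ∀ y : ℝ, 0 < y →
      HasDerivAt (fun x : ℝ => Real.log x - (2*x - 2)/(x + 1)) (1/y - 4/(y+1)^2) y := by
    intro y hy
    have h1 : HasDerivAt Real.log (1/y) y := by
      simpa [one_div] using Real.hasDerivAt_log (ne_of_gt hy)
    have h2 : HasDerivAt (fun x : ℝ => 2*x - 2) 2 y := by
      simpa using ((hasDerivAt_id y).const_mul 2).sub_const 2
    have h3 : HasDerivAt (fun x : ℝ => x + 1) 1 y := (hasDerivAt_id y).add_const 1
    have hne : y + 1 ≠ 0 := by linarith
    have h4 := h2.div h3 hne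
    refine (h1.sub h4).congr_deriv ?_
    have hy' : y ≠ 0 := ne_of_gt hy
    ring
  have hmono : MonotoneOn (fun x : ℝ => Real.log x - (2*x - 2)/(x + 1)) (Ici 1) := by
    apply monotoneOn_of_deriv_nonneg (convex_Ici 1)
    · intro y hy
      have hy0 : (0:ℝ) < y := lt_of_lt_of_le one_pos hy
      exact ((hd y hy0).differentiableAt).continuousAt.continuousWithinAt
    · intro y hy
      rw [interior_Ici] at hy
      exact ((hd y (lt_trans one_pos hy)).differentiableAt).differentiableWithinAt
    · intro y hy
      rw [interior_Ici] at hy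
      have hy0 : (0:ℝ) < y := lt_trans one_pos hy
      rw [(hd y hy0).deriv]
      have : 1/y - 4/(y+1)^2 = (y-1)^2/(y*(y+1)^2) := by
        field_simp
        ring
      rw [this]
      positivity
  intro x hx
  have := hmono self_mem_Ici (mem_Ici.mpr hx) hx
  simp only [Real.log_one] at this
  norm_num at this
  linarith

theorem corrugation_amplitude_lower_bound (f : ℝ → ℝ)
    (hdiff : Differentiable ℝ f) (hf0 : f 0 = 0)
    (hnonneg : ∀ s, 0 ≤ s → 0 ≤ f s)
    (hbound : ∀ s, 0 ≤ s →
      8*s/((4 + s^2)*(1 + s^2)) ≤ deriv (fun x => (f x)^2) s / 2) :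
    ∀ s, 0 ≤ s →
      16*s^2/(8 + 5*s^2) ≤ (8/3) * Real.log ((4*s^2 + 4)/(s^2 + 4)) ∧
      (8/3) * Real.log ((4*s^2 + 4)/(s^2 + 4)) ≤ (f s)^2 := by
  -- the auxiliary function
  set g : ℝ → ℝ := fun x => (f x)^2 - (8/3)*(Real.log (4*x^2+4) - Real.log (x^2+4)) with hg
  have hderivg : ∀ y : ℝ, HasDerivAt g
      (deriv (fun x => (f x)^2) y - (8/3)*(8*y/(4*y^2+4) - 2*y/(y^2+4))) y := by
    intro y
    have hf2 : DifferentiableAt ℝ (fun x => (f x)^2) y := (hdiff y).pow 2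
    have hp1 : HasDerivAt (fun x : ℝ => 4*x^2+4) (8*y) y := by
      have := ((hasDerivAt_pow 2 y).const_mul 4).add_const 4
      refine this.congr_deriv ?_
      norm_num
      ring
    have hp2 : HasDerivAt (fun x : ℝ => x^2+4) (2*y) y := by
      have := (hasDerivAt_pow 2 y).add_const 4
      refine this.congr_deriv ?_
      norm_num
    have hn1 : 4*y^2+4 ≠ 0 := by positivity
    have hn2 : y^2+4 ≠ 0 := by positivity
    have hl1 : HasDerivAt (fun x : ℝ => Real.log (4*x^2+4)) (8*y/(4*y^2+4)) y := hp1.log hn1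
    have hl2 : HasDerivAt (fun x : ℝ => Real.log (x^2+4)) (2*y/(y^2+4)) y := hp2.log hn2
    exact hf2.hasDerivAt.sub ((hl1.sub hl2).const_mul (8/3))
  have hmono : MonotoneOn g (Ici 0) := by
    apply monotoneOn_of_deriv_nonneg (convex_Ici 0)
    · intro y _
      exact ((hderivg y).differentiableAt).continuousAt.continuousWithinAt
    · intro y _
      exact ((hderivg y).differentiableAt).differentiableWithinAt
    · intro y hy
      rw [interior_Ici] at hy
      have hy0 : (0:ℝ) ≤ y := le_of_lt hy
      rw [(hderivg y).deriv]
      have hb := hbound y hy0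
      have key : (8/3)*(8*y/(4*y^2+4) - 2*y/(y^2+4)) = 16*y/((4 + y^2)*(1 + y^2)) := by
        have hn1 : 4*y^2+4 ≠ 0 := by positivity
        have hn2 : y^2+4 ≠ 0 := by positivity
        have hn3 : (4 + y^2)*(1 + y^2) ≠ 0 := by positivity
        field_simp
        ring
      rw [key]
      have : 16*y/((4 + y^2)*(1 + y^2)) = 2 * (8*y/((4 + y^2)*(1 + y^2))) := by ring
      rw [this]
      linarith
  have hg0 : g 0 = 0 := by
    simp [hg, hf0]
  intro s hs
  have hden : s^2 + 4 ≠ 0 := by positivity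
  have hnum : 4*s^2 + 4 ≠ 0 := by positivity
  have hdenpos : (0:ℝ) < s^2 + 4 := by positivity
  have hlogdiv : Real.log ((4*s^2 + 4)/(s^2 + 4))
      = Real.log (4*s^2+4) - Real.log (s^2+4) := Real.log_div hnum hden
  constructor
  · -- first inequality
    set x : ℝ := (4*s^2 + 4)/(s^2 + 4) with hx
    have hx1 : 1 ≤ x := by
      rw [hx, le_div_iff₀ hdenpos]
      nlinarith
    have hlog := log_ge_two_sub_aux x hx1
    have hxne : x + 1 ≠ 0 := by positivity
    have heq : 16*s^2/(8 + 5*s^2) = (8/3) * ((2*x - 2)/(x + 1)) := by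
      rw [hx]
      have h2 : (8:ℝ) + 5*s^2 ≠ 0 := by positivity
      have h3 : (4*s^2 + 4)/(s^2 + 4) + 1 ≠ 0 := by positivity
      field_simp
      ring
    rw [heq]
    have h83 : (0:ℝ) ≤ 8/3 := by norm_num
    exact mul_le_mul_of_nonneg_left hlog h83
  · -- second inequality
    have := hmono self_mem_Ici (mem_Ici.mpr hs) hs
    rw [hg0] at this
    simp only [hg] at this
    rw [hlogdiv]
    linarith
end

section
/- Let γ : [0, ε) → (M, g) be a unit-speed C⁴ curve with γ(0) = p, and work in geodesic normal coordinates centered at p with γ̄ = exp_p^{-1} ∘ γ. Then γ̄''(0) = (∇_{γ'}γ')(0) and γ̄'''(0) = (∇²_{γ'}γ')(0)·(at t=0), i.e. the second and third Euclidean derivatives of γ̄ at 0 equal the first and second covariant derivatives of γ' at 0. -/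
open scoped BigOperators

private lemma sum_antisym {n : ℕ} (A : Fin n → Fin n → ℝ) (hA : ∀ a b, A a b = - A b a)
    (v : Fin n → ℝ) : ∑ a, ∑ b, A a b * (v a * v b) = 0 := by
  have h1 : (∑ a, ∑ b, A a b * (v a * v b)) = ∑ b, ∑ a, A a b * (v a * v b) :=
    Finset.sum_comm
  have h2 : (∑ b, ∑ a, A a b * (v a * v b))
      = -∑ a, ∑ b, A a b * (v a * v b) := by
    rw [← Finset.sum_neg_distrib]
    refine Finset.sum_congr rfl fun x _ => ?_
    rw [← Finset.sum_neg_distrib]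
    refine Finset.sum_congr rfl fun y _ => ?_
    rw [hA y x]; ring
  linarith

private lemma key_sum {n : ℕ} (R : Fin n → Fin n → Fin n → Fin n → ℝ)
    (hR : ∀ i j k l, R i j k l = - R i j l k) (v : Fin n → ℝ) (k : Fin n) :
    ∑ i, ∑ j, (∑ l, v l * (-(1/3) * (R k i j l + R k j i l))) * v i * v j = 0 := by
  have hsplit : (∑ i, ∑ j, (∑ l, v l * (-(1/3) * (R k i j l + R k j i l))) * v i * v j)
      = (∑ i, ∑ j, ∑ l, (-(1/3) * v i * R k i j l) * (v j * v l))
        + (∑ i, ∑ j, ∑ l, (-(1/3) * v j * R k j i l) * (v i * v l)) := by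
    rw [← Finset.sum_add_distrib]
    refine Finset.sum_congr rfl fun i _ => ?_
    rw [← Finset.sum_add_distrib]
    refine Finset.sum_congr rfl fun j _ => ?_
    rw [Finset.sum_mul, Finset.sum_mul, ← Finset.sum_add_distrib]
    refine Finset.sum_congr rfl fun l _ => ?_
    ring
  rw [hsplit]
  have h1 : (∑ i, ∑ j, ∑ l, (-(1/3) * v i * R k i j l) * (v j * v l)) = 0 := by
    refine Finset.sum_eq_zero fun i _ => ?_
    exact sum_antisym (fun j l => -(1/3) * v i * R k i j l)
      (fun a b => by rw [hR k i a b]; ring) v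
  have h2 : (∑ i, ∑ j, ∑ l, (-(1/3) * v j * R k j i l) * (v i * v l)) = 0 := by
    rw [Finset.sum_comm]
    refine Finset.sum_eq_zero fun j _ => ?_
    exact sum_antisym (fun i l => -(1/3) * v j * R k j i l)
      (fun a b => by rw [hR k j a b]; ring) v
  rw [h1, h2, add_zero]

/-- In geodesic normal coordinates centered at `p` (Christoffel symbols `Γ` vanish at the
origin and `∂_l Γ^i_{jk}(0) = −(1/3)(R^i_{jkl}(0) + R^i_{kjl}(0))` with `R` antisymmetric in
its last two slots), for a curve `c = γ̄` with `c(0) = 0`, the first and second covariant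
derivatives of the velocity at `t = 0` equal the second and third coordinate derivatives:
`(∇_{γ'}γ')(0) = γ̄''(0)` and `(∇²_{γ'}γ')(0) = γ̄'''(0)`. -/
theorem covariant_derivatives_in_normal_coordinates (n : ℕ)
    (Γ : (Fin n → ℝ) → Fin n → Fin n → Fin n → ℝ)  -- Christoffel symbols `Γ x k i j = Γ^k_{ij}(x)`
    (hΓsmooth : ∀ k i j, ContDiff ℝ (⊤ : ℕ∞) (fun x => Γ x k i j))
    (hΓ0 : ∀ k i j, Γ 0 k i j = 0)
    (R : Fin n → Fin n → Fin n → Fin n → ℝ)        -- curvature tensor `R^i_{jkl}` at the origin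
    (hR : ∀ i j k l, R i j k l = - R i j l k)
    (hΓderiv : ∀ i j k l,
      fderiv ℝ (fun x => Γ x i j k) 0 (Pi.single l 1) = -(1/3) * (R i j k l + R i k j l))
    (c : ℝ → Fin n → ℝ) (hc : ContDiff ℝ 4 c) (hc0 : c 0 = 0) :
    -- first covariant derivative of `c'` at `0` equals `c''(0)`
    (∀ k, deriv (fun t => deriv (fun s => c s k) t) 0
        + ∑ i, ∑ j, Γ (c 0) k i j * deriv (fun s => c s i) 0 * deriv (fun s => c s j) 0
      = deriv (fun t => deriv (fun s => c s k) t) 0) ∧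
    -- second covariant derivative of `c'` at `0` equals `c'''(0)`
    (∀ k, deriv (fun t =>
          deriv (fun r => deriv (fun s => c s k) r) t
            + ∑ i, ∑ j, Γ (c t) k i j * deriv (fun s => c s i) t * deriv (fun s => c s j) t) 0
        + ∑ i, ∑ j, Γ (c 0) k i j * deriv (fun s => c s i) 0 *
            (deriv (fun r => deriv (fun s => c s j) r) 0
              + ∑ a, ∑ b, Γ (c 0) j a b * deriv (fun s => c s a) 0 * deriv (fun s => c s b) 0)
      = deriv (fun t => deriv (fun r => deriv (fun s => c s k) r) t) 0) := by
  -- basic smoothness facts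
  have hci : ∀ i, ContDiff ℝ 4 (fun s => c s i) := fun i =>
    ((ContinuousLinearMap.proj i : (Fin n → ℝ) →L[ℝ] ℝ).contDiff (n := 4)).comp hc
  have hd1 : ∀ i, ContDiff ℝ 3 (deriv (fun s => c s i)) := fun i =>
    (((contDiff_succ_iff_deriv (n := 3)).mp (by exact_mod_cast hci i)).2).2
  have hd2 : ∀ i, ContDiff ℝ 2 (deriv (deriv (fun s => c s i))) := fun i =>
    (((contDiff_succ_iff_deriv (n := 2)).mp (by exact_mod_cast hd1 i)).2).2
  have hcd : Differentiable ℝ c := hc.differentiable (by norm_num)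
  have hcD : HasDerivAt c (deriv c 0) 0 := (hcd 0).hasDerivAt
  -- component derivatives
  set v : Fin n → ℝ := fun l => deriv (fun s => c s l) 0 with hv
  have hvl : ∀ l, deriv c 0 l = v l := by
    intro l
    have := ((ContinuousLinearMap.proj l : (Fin n → ℝ) →L[ℝ] ℝ).hasFDerivAt).comp_hasDerivAt
      0 hcD
    exact (this.deriv).symm
  -- first part is trivial since Γ(0) = 0
  refine ⟨fun k => by simp [hc0, hΓ0], fun k => ?_⟩
  -- derivative of Γ ∘ c at 0
  have hΓc : ∀ k i j, HasDerivAt (fun t => Γ (c t) k i j)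
      (∑ l, v l * (-(1/3) * (R k i j l + R k j i l))) 0 := by
    intro k i j
    have hdiff : DifferentiableAt ℝ (fun x => Γ x k i j) (c 0) :=
      ((hΓsmooth k i j).differentiable (by simp)) (c 0)
    have h := hdiff.hasFDerivAt.comp_hasDerivAt 0 hcD
    have hrep : deriv c 0 = ∑ l, (deriv c 0 l) • (Pi.single l 1 : Fin n → ℝ) := by
      funext j'
      simp [Pi.single_apply]
    have hval : (fderiv ℝ (fun x => Γ x k i j) (c 0)) (deriv c 0)
        = ∑ l, v l * (-(1/3) * (R k i j l + R k j i l)) := by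
      rw [hc0]
      conv_lhs => rw [hrep]
      rw [map_sum]
      refine Finset.sum_congr rfl fun l _ => ?_
      rw [map_smul, smul_eq_mul, hΓderiv k i j l, hvl l]
    rw [hval] at h
    exact h
  have hd1D : ∀ i, HasDerivAt (deriv (fun s => c s i))
      (deriv (deriv (fun s => c s i)) 0) 0 := fun i =>
    (((hd1 i).differentiable (by norm_num)) 0).hasDerivAt
  -- derivative of each product term at 0
  have hg : ∀ i j, HasDerivAt
      (fun t => Γ (c t) k i j * deriv (fun s => c s i) t * deriv (fun s => c s j) t)
      ((∑ l, v l * (-(1/3) * (R k i j l + R k j i l))) * v i * v j) 0 := by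
    intro i j
    have h := ((hΓc k i j).fun_mul (hd1D i)).fun_mul (hd1D j)
    have h0 : Γ (c 0) k i j = 0 := by rw [hc0]; exact hΓ0 k i j
    have heq : ((∑ l, v l * (-(1/3) * (R k i j l + R k j i l))) * deriv (fun s => c s i) 0
          + Γ (c 0) k i j * deriv (deriv fun s => c s i) 0) * deriv (fun s => c s j) 0
        + Γ (c 0) k i j * deriv (fun s => c s i) 0 * deriv (deriv fun s => c s j) 0
        = (∑ l, v l * (-(1/3) * (R k i j l + R k j i l))) * v i * v j := by
      rw [h0, hv]; ring
    rw [heq] at h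
    exact h
  -- derivative of the full expression
  have hd2D : HasDerivAt (fun t => deriv (fun r => deriv (fun s => c s k) r) t)
      (deriv (fun t => deriv (fun r => deriv (fun s => c s k) r) t) 0) 0 :=
    (((hd2 k).differentiable (by norm_num)) 0).hasDerivAt
  have hsum : HasDerivAt
      (fun t => ∑ i, ∑ j, Γ (c t) k i j * deriv (fun s => c s i) t * deriv (fun s => c s j) t)
      (∑ i, ∑ j, (∑ l, v l * (-(1/3) * (R k i j l + R k j i l))) * v i * v j) 0 := by
    refine HasDerivAt.fun_sum fun i _ => HasDerivAt.fun_sum fun j _ => hg i j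
  have htotal := hd2D.fun_add hsum
  rw [key_sum R hR v k, add_zero] at htotal
  rw [htotal.deriv]
  simp [hc0, hΓ0]
end
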